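/- arXiv:math/0701250 — 4 statements merged into one kernel-verified Lean document; each statement's English description precedes it below -/
import Mathlib

section
/- Let V be a noncentral chi-square random variable with N degrees of freedom and noncentrality parameter a ≥ 0, and let p be a positive integer with N > 2p. Then E[V^{-p}] ≤ 1/((N-2)(N-4)⋯(N-2p)). -/
open MeasureTheory ProbabilityTheory Real

/-!
Euler's integral gives `v^{-(q+1)} = (1/q!) ∫₀^∞ t^q e^{-tv} dt` for `v > 0`, so by Tonelli
`E[V^{-(q+1)}] = (1/q!) ∫₀^∞ t^q E[e^{-tV}] dt`. Completing the square, a unit-variance Gaussian `X`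
with mean `μ` has `E[e^{-tX²}] = (1+2t)^{-1/2} e^{-tμ²/(1+2t)} ≤ (1+2t)^{-1/2}`, so by independence
`E[e^{-tV}] ≤ (1+2t)^{-N/2}`, the Laplace transform of the central chi-square law. Finally
`∫₀^∞ t^q (1+t)^{-r} dt = q! / ((r-1)(r-2)⋯(r-q-1))` by repeated integration by parts, and the
substitution `t ↦ 2t` turns this, for `r = N/2`, into `q! / ((N-2)(N-4)⋯(N-2q-2))`.
-/

open Set Filter
open scoped ENNReal NNReal Topology Nat

lemma integral_pow_mul_exp_neg_mul_Ioi (q : ℕ) {v : ℝ} (hv : 0 < v) :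
    ∫ t in Ioi (0 : ℝ), t ^ q * exp (-(t * v)) = q ! / v ^ (q + 1) := by
  have h := integral_rpow_mul_exp_neg_mul_Ioi (a := q + 1) (by positivity) hv
  rw [add_sub_cancel_right, Gamma_nat_eq_factorial, one_div, inv_rpow hv.le,
    ← Nat.cast_succ, rpow_natCast] at h
  rw [div_eq_inv_mul, ← h]
  refine setIntegral_congr_fun measurableSet_Ioi fun t _ => ?_
  simp only [rpow_natCast, mul_comm t v]

lemma ofReal_inv_pow_eq_lintegral (q : ℕ) {v : ℝ} (hv : 0 < v) :
    ENNReal.ofReal (v ^ (q + 1))⁻¹ =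
      ENNReal.ofReal (q ! : ℝ)⁻¹ * ∫⁻ t in Ioi 0, ENNReal.ofReal (t ^ q * exp (-(t * v))) := by
  have hint : IntegrableOn (fun t : ℝ => t ^ q * exp (-(t * v))) (Ioi 0) :=
    Integrable.of_integral_ne_zero (by rw [integral_pow_mul_exp_neg_mul_Ioi q hv]; positivity)
  rw [← ofReal_integral_eq_lintegral_ofReal hint ?_, ← ENNReal.ofReal_mul (by positivity),
    integral_pow_mul_exp_neg_mul_Ioi q hv]
  · congr 1; field_simp
  · filter_upwards [ae_restrict_mem measurableSet_Ioi] with t ht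
    exact mul_nonneg (pow_nonneg (le_of_lt ht) _) (exp_pos _).le

lemma pow_mul_one_add_rpow_neg_le (q : ℕ) {r t : ℝ} (hr : 0 ≤ r) (ht : 0 < t) :
    t ^ q * (1 + t) ^ (-r) ≤ t ^ ((q : ℝ) - r) := by
  rw [sub_eq_add_neg, rpow_add ht, rpow_natCast]
  exact mul_le_mul_of_nonneg_left
    (rpow_le_rpow_of_nonpos ht (by linarith) (neg_nonpos.2 hr)) (by positivity)

lemma continuousOn_pow_mul_one_add_rpow (q : ℕ) (r : ℝ) :
    ContinuousOn (fun t : ℝ => t ^ q * (1 + t) ^ r) (Ici 0) :=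
  (continuousOn_pow q).mul <| (continuousOn_const.add continuousOn_id).rpow_const
    fun t (ht : 0 ≤ t) => Or.inl (by linarith : (0 : ℝ) < 1 + t).ne'

lemma integrableOn_pow_mul_one_add_rpow_neg (q : ℕ) {r : ℝ} (hr : q + 1 < r) :
    IntegrableOn (fun t : ℝ => t ^ q * (1 + t) ^ (-r)) (Ioi 0) := by
  rw [← Ioc_union_Ioi_eq_Ioi zero_le_one]
  refine IntegrableOn.union ?_ ?_
  · exact ((continuousOn_pow_mul_one_add_rpow q _).mono Icc_subset_Ici_self).integrableOn_Icc
      |>.mono_set Ioc_subset_Icc_self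
  · refine (integrableOn_Ioi_rpow_of_lt (a := (q : ℝ) - r) (by linarith) one_pos).mono' ?_ ?_
    · exact ((continuousOn_pow_mul_one_add_rpow q _).mono
        (Ioi_subset_Ici zero_le_one)).aestronglyMeasurable measurableSet_Ioi
    · filter_upwards [ae_restrict_mem measurableSet_Ioi] with t (ht : 1 < t)
      rw [norm_of_nonneg (by positivity)]
      exact pow_mul_one_add_rpow_neg_le q (by linarith) (by linarith)

lemma tendsto_pow_mul_one_add_rpow_neg_atTop (q : ℕ) {r : ℝ} (hr : q < r) :
    Tendsto (fun t : ℝ => t ^ q * (1 + t) ^ (-r)) atTop (𝓝 0) := by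
  have hdecay : Tendsto (fun t : ℝ => t ^ ((q : ℝ) - r)) atTop (𝓝 0) := by
    simpa using tendsto_rpow_neg_atTop (y := r - q) (by linarith)
  refine squeeze_zero' ?_ ?_ hdecay
  · filter_upwards [eventually_ge_atTop 0] with t ht
    exact mul_nonneg (pow_nonneg ht q) (rpow_nonneg (by linarith) _)
  · filter_upwards [eventually_gt_atTop 0] with t ht
    exact pow_mul_one_add_rpow_neg_le q ((Nat.cast_nonneg q).trans hr.le) ht

lemma hasDerivAt_one_add_rpow_neg_div {r t : ℝ} (hr : r ≠ 1) (ht : 0 < 1 + t) :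
    HasDerivAt (fun t => -(1 + t) ^ (-(r - 1)) / (r - 1)) ((1 + t) ^ (-r)) t := by
  refine (((hasDerivAt_id' t).const_add 1).rpow_const (p := -(r - 1))
    (Or.inl ht.ne')).neg.div_const (r - 1) |>.congr_deriv ?_
  rw [show -(r - 1) - 1 = -r by ring]
  field_simp [sub_ne_zero.2 hr]

lemma integral_one_add_rpow_neg {r : ℝ} (hr : 1 < r) :
    ∫ t in Ioi (0 : ℝ), (1 + t) ^ (-r) = (r - 1)⁻¹ := by
  have h := integral_Ioi_of_hasDerivAt_of_tendsto' (a := 0) (m := 0)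
    (fun t (ht : 0 ≤ t) => hasDerivAt_one_add_rpow_neg_div hr.ne' (by linarith))
    (by simpa using integrableOn_pow_mul_one_add_rpow_neg 0 (by simpa using hr))
    (by simpa using (tendsto_pow_mul_one_add_rpow_neg_atTop 0 (r := r - 1)
      (by simpa using hr)).neg.div_const (r - 1))
  rw [h]
  simp [div_eq_inv_mul]

lemma integral_pow_succ_mul_one_add_rpow_neg (q : ℕ) {r : ℝ} (hr : q + 2 < r) :
    ∫ t in Ioi (0 : ℝ), t ^ (q + 1) * (1 + t) ^ (-r) =
      (q + 1) / (r - 1) * ∫ t in Ioi (0 : ℝ), t ^ q * (1 + t) ^ (-(r - 1)) := by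
  let u : ℝ → ℝ := fun t => t ^ (q + 1)
  let v : ℝ → ℝ := fun t => -(1 + t) ^ (-(r - 1)) / (r - 1)
  have hu'v : (fun t : ℝ => (q + 1) * t ^ q) * v =
      fun t => -((q + 1) / (r - 1)) * (t ^ q * (1 + t) ^ (-(r - 1))) := by
    ext t; simp only [v, Pi.mul_apply]; ring
  have huv : u * v = fun t => -(r - 1)⁻¹ * (t ^ (q + 1) * (1 + t) ^ (-(r - 1))) := by
    ext t; simp only [u, v, Pi.mul_apply]; ring
  have hcont : ContinuousAt (u * v) 0 := by
    rw [huv]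
    exact continuousAt_const.mul ((continuousAt_pow _ _).mul
      ((continuousAt_const.add continuousAt_id).rpow_const (Or.inl (by norm_num))))
  have hlim : Tendsto (u * v) atTop (𝓝 0) := by
    rw [huv, ← mul_zero (-(r - 1)⁻¹)]
    exact (tendsto_pow_mul_one_add_rpow_neg_atTop (q + 1) (by push_cast; linarith)).const_mul _
  have h := integral_Ioi_mul_deriv_eq_deriv_mul (a := 0) (a' := 0) (b' := 0) (u := u) (v := v)
    (u' := fun t => (q + 1) * t ^ q) (v' := fun t => (1 + t) ^ (-r))
    (fun t _ => by simpa [u] using hasDerivAt_pow (q + 1) t)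
    (fun t (ht : 0 < t) => hasDerivAt_one_add_rpow_neg_div (by linarith) (by linarith))
    (integrableOn_pow_mul_one_add_rpow_neg (q + 1) (by push_cast; linarith))
    (by rw [hu'v]; exact (integrableOn_pow_mul_one_add_rpow_neg q (by linarith)).const_mul _)
    (by simpa [u] using hcont.tendsto.mono_left nhdsWithin_le_nhds) hlim
  rw [h, sub_self, zero_sub, ← integral_const_mul, ← integral_neg]
  congr 1 with t
  simp only [v]
  ring

theorem integral_pow_mul_one_add_rpow_neg (q : ℕ) {r : ℝ} (hr : q + 1 < r) :
    ∫ t in Ioi (0 : ℝ), t ^ q * (1 + t) ^ (-r) =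
      q ! / ∏ j ∈ Finset.range (q + 1), (r - (j + 1)) := by
  induction q generalizing r with
  | zero => simpa using integral_one_add_rpow_neg (by simpa using hr)
  | succ q ih =>
    push_cast at hr
    rw [integral_pow_succ_mul_one_add_rpow_neg q (by linarith), ih (by linarith),
      div_mul_div_comm, Finset.prod_range_succ' (fun j : ℕ => r - ((j : ℝ) + 1)) (q + 1),
      Nat.factorial_succ, mul_comm (r - 1)]
    push_cast
    congr 2
    · exact Finset.prod_congr rfl fun j _ => by ring
    · ring

lemma integral_pow_mul_one_add_mul_rpow_neg (q : ℕ) {c : ℝ} (hc : 0 < c) (r : ℝ) :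
    ∫ t in Ioi (0 : ℝ), t ^ q * (1 + c * t) ^ (-r) =
      (c ^ (q + 1))⁻¹ * ∫ t in Ioi (0 : ℝ), t ^ q * (1 + t) ^ (-r) := by
  have h := integral_comp_mul_left_Ioi (fun t => t ^ q * (1 + t) ^ (-r)) 0 hc
  simp only [mul_zero, smul_eq_mul, mul_pow, mul_assoc, integral_const_mul] at h
  rw [eq_inv_mul_iff_mul_eq₀ (by positivity), pow_succ, mul_comm _ c, mul_assoc, h,
    mul_inv_cancel_left₀ hc.ne']

lemma integrableOn_pow_mul_one_add_mul_rpow_neg (q : ℕ) {c r : ℝ} (hc : 0 < c)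
    (hr : q + 1 < r) : IntegrableOn (fun t : ℝ => t ^ q * (1 + c * t) ^ (-r)) (Ioi 0) := by
  have h := (integrableOn_Ioi_comp_mul_left_iff (fun t => t ^ q * (1 + t) ^ (-r)) 0 hc).2
    (by simpa using integrableOn_pow_mul_one_add_rpow_neg q hr)
  refine IntegrableOn.congr_fun (h.const_mul (c ^ q)⁻¹) (fun t _ => ?_) measurableSet_Ioi
  rw [mul_pow, mul_assoc, inv_mul_cancel_left₀ (by positivity)]

lemma integral_exp_neg_mul_sq_gaussianReal (μ₀ : ℝ) {s : ℝ} (hs : 0 < 1 + 2 * s) :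
    ∫ x, exp (-(s * x ^ 2)) ∂gaussianReal μ₀ 1 =
      exp (-(s * μ₀ ^ 2 / (1 + 2 * s))) / √(1 + 2 * s) := by
  have hsquare : ∀ x, gaussianPDFReal μ₀ 1 x • exp (-(s * x ^ 2)) =
      (√(2 * π))⁻¹ * exp (-(s * μ₀ ^ 2 / (1 + 2 * s))) *
        exp (-((1 + 2 * s) / 2) * (x - μ₀ / (1 + 2 * s)) ^ 2) := fun x => by
    rw [gaussianPDFReal, smul_eq_mul, NNReal.coe_one, mul_one, mul_assoc, ← exp_add, mul_assoc,
      ← exp_add]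
    congr 2
    field_simp
    ring
  simp_rw [integral_gaussianReal_eq_integral_smul one_ne_zero, hsquare]
  rw [integral_const_mul, integral_sub_right_eq_self (fun x => exp (-((1 + 2 * s) / 2) * x ^ 2)),
    integral_gaussian, div_div_eq_mul_div, mul_comm π 2, sqrt_div (by positivity)]
  field_simp

section Probability

variable {Ω : Type*} [MeasurableSpace Ω] {μ : Measure Ω}

lemma lintegral_ofReal_inv_pow_eq [SFinite μ] {V : Ω → ℝ} (hV : Measurable V)
    (hVpos : ∀ᵐ ω ∂μ, 0 < V ω) (q : ℕ) :
    ∫⁻ ω, ENNReal.ofReal (V ω ^ (q + 1))⁻¹ ∂μ = ENNReal.ofReal (q ! : ℝ)⁻¹ *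
      ∫⁻ t in Ioi 0, ∫⁻ ω, ENNReal.ofReal (t ^ q * exp (-(t * V ω))) ∂μ := by
  have hjoint : Measurable (Function.uncurry fun ω (t : ℝ) =>
      ENNReal.ofReal (t ^ q * exp (-(t * V ω)))) := by
    fun_prop
  rw [← lintegral_lintegral_swap hjoint.aemeasurable,
    ← lintegral_const_mul' _ _ ENNReal.ofReal_ne_top]
  refine lintegral_congr_ae ?_
  filter_upwards [hVpos] with ω hω using ofReal_inv_pow_eq_lintegral q hω

theorem integral_inv_pow_le_of_integral_exp_neg_mul_le [IsFiniteMeasure μ] {V : Ω → ℝ}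
    (hV : Measurable V) (hVpos : ∀ᵐ ω ∂μ, 0 < V ω) (q : ℕ) {L : ℝ → ℝ}
    (hL : ∀ t > 0, ∫ ω, exp (-(t * V ω)) ∂μ ≤ L t)
    (hLint : IntegrableOn (fun t => t ^ q * L t) (Ioi 0)) :
    ∫ ω, (V ω ^ (q + 1))⁻¹ ∂μ ≤ (q ! : ℝ)⁻¹ * ∫ t in Ioi 0, t ^ q * L t := by
  have hL_nonneg : ∀ t > 0, 0 ≤ t ^ q * L t := fun t ht =>
    mul_nonneg (pow_nonneg ht.le _) ((integral_nonneg fun _ => (exp_pos _).le).trans (hL t ht))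
  have hinner : ∀ t > 0, ∫⁻ ω, ENNReal.ofReal (t ^ q * exp (-(t * V ω))) ∂μ ≤
      ENNReal.ofReal (t ^ q * L t) := fun t ht => by
    have hexp_int : Integrable (fun ω => exp (-(t * V ω))) μ :=
      (integrable_const (1 : ℝ)).mono' (hV.const_mul t).neg.exp.aestronglyMeasurable <| by
        filter_upwards [hVpos] with ω hω
        rw [norm_of_nonneg (exp_pos _).le, exp_le_one_iff, neg_nonpos]
        positivity
    rw [← ofReal_integral_eq_lintegral_ofReal (hexp_int.const_mul _)
      (ae_of_all _ fun ω => mul_nonneg (pow_nonneg ht.le _) (exp_pos _).le), integral_const_mul]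
    gcongr
    exact hL t ht
  have hlint : ∫⁻ ω, ENNReal.ofReal (V ω ^ (q + 1))⁻¹ ∂μ ≤
      ENNReal.ofReal ((q ! : ℝ)⁻¹ * ∫ t in Ioi 0, t ^ q * L t) := by
    rw [lintegral_ofReal_inv_pow_eq hV hVpos, ENNReal.ofReal_mul (by positivity),
      ofReal_integral_eq_lintegral_ofReal hLint
        ((ae_restrict_mem measurableSet_Ioi).mono hL_nonneg)]
    gcongr _ * ?_
    exact setLIntegral_mono' measurableSet_Ioi hinner
  rw [integral_eq_lintegral_of_nonneg_ae (hVpos.mono fun ω hω => by positivity) (by fun_prop)]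
  exact ENNReal.toReal_le_of_le_ofReal (mul_nonneg (by positivity)
    (setIntegral_nonneg measurableSet_Ioi hL_nonneg)) hlint

lemma ae_ne_of_map_eq_gaussianReal {X : Ω → ℝ} (hX : AEMeasurable X μ) {m : ℝ} {v : ℝ≥0}
    (hv : v ≠ 0) (hlaw : μ.map X = gaussianReal m v) (c : ℝ) : ∀ᵐ ω ∂μ, X ω ≠ c := by
  have := nullSingletonClass_gaussianReal (μ := m) hv
  refine ae_of_ae_map (p := fun x => x ≠ c) hX ?_
  rw [hlaw, ae_iff]
  simp

lemma integral_exp_neg_mul_sum_sq_le {ι : Type*} [Fintype ι] {X : ι → Ω → ℝ}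
    (hX : ∀ i, AEMeasurable (X i) μ) (hindep : iIndepFun X μ) {m : ι → ℝ} (hlaw : ∀ i, μ.map (X i) = gaussianReal (m i) 1) {t : ℝ} (ht : 0 ≤ t) :
    ∫ ω, exp (-(t * ∑ i, X i ω ^ 2)) ∂μ ≤ (1 + 2 * t) ^ (-(Fintype.card ι / 2 : ℝ)) := by
  have hfactor : ∀ i, ∫ ω, exp (-(t * X i ω ^ 2)) ∂μ ≤ (1 + 2 * t) ^ (-(1 / 2 : ℝ)) := fun i => by
    have h := integral_map (μ := μ) (f := fun x => exp (-(t * x ^ 2))) (hX i) (by fun_prop)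
    rw [hlaw i, integral_exp_neg_mul_sq_gaussianReal _ (by positivity)] at h
    rw [← h, sqrt_eq_rpow, rpow_neg (by positivity), div_eq_mul_inv]
    refine mul_le_of_le_one_left (by positivity) ?_
    rw [exp_le_one_iff, neg_nonpos]
    positivity
  calc ∫ ω, exp (-(t * ∑ i, X i ω ^ 2)) ∂μ = ∏ i, ∫ ω, exp (-(t * X i ω ^ 2)) ∂μ := by
        have h := (hindep.comp (fun _ x => x ^ 2) fun _ => by fun_prop).mgf_sum₀
          (fun i => (hX i).pow_const 2) Finset.univ (t := -t)
        simpa only [mgf, Function.comp_def, Finset.sum_apply, neg_mul] using h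
    _ ≤ ∏ _i : ι, (1 + 2 * t) ^ (-(1 / 2 : ℝ)) :=
        Finset.prod_le_prod (fun _ _ => integral_nonneg fun _ => (exp_pos _).le)
          fun i _ => hfactor i
    _ = (1 + 2 * t) ^ (-(Fintype.card ι / 2 : ℝ)) := by
        rw [Finset.prod_const, Finset.card_univ, ← rpow_natCast, ← rpow_mul (by positivity)]
        ring_nf

lemma ae_sum_sq_pos_of_map_eq_gaussianReal {ι : Type*} [Fintype ι] {X : ι → Ω → ℝ} (i₀ : ι)
    (hX : AEMeasurable (X i₀) μ) {m : ℝ} {v : ℝ≥0} (hv : v ≠ 0)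
    (hlaw : μ.map (X i₀) = gaussianReal m v) : ∀ᵐ ω ∂μ, 0 < ∑ i, X i ω ^ 2 := by
  filter_upwards [ae_ne_of_map_eq_gaussianReal hX hv hlaw 0] with ω hω
  exact (sq_pos_of_ne_zero hω).trans_le
    (Finset.single_le_sum (fun i _ => sq_nonneg (X i ω)) (Finset.mem_univ i₀))

end Probability

lemma prod_Icc_sub_two_mul (x : ℝ) (n : ℕ) :
    ∏ k ∈ Finset.Icc 1 n, (x - 2 * k) = 2 ^ n * ∏ j ∈ Finset.range n, (x / 2 - (j + 1)) := by
  have h := Finset.pow_card_mul_prod (s := Finset.range n) (b := (2 : ℝ))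
    (f := fun j : ℕ => x / 2 - (j + 1))
  rw [Finset.card_range] at h
  rw [h, ← Finset.Ico_add_one_right_eq_Icc, Finset.prod_Ico_eq_prod_range, Nat.add_sub_cancel]
  refine Finset.prod_congr rfl fun j _ => ?_
  push_cast
  ring

theorem stmt_3_general
    {Ω : Type*} [MeasureSpace Ω] [IsProbabilityMeasure (ℙ : Measure Ω)]
    (N p : ℕ) (hp : 0 < p) (hN : 2 * p < N)
    (m : Fin N → ℝ)
    (Z : Ω → Fin N → ℝ)
    (hmeas : ∀ i, Measurable fun ω => Z ω i)
    (hindep : iIndepFun (fun i ω => Z ω i) ℙ)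
    (hlaw : ∀ i, Measure.map (fun ω => Z ω i) ℙ = gaussianReal (m i) 1)
    (V : Ω → ℝ) (hV : ∀ ω, V ω = ∑ i, (Z ω i) ^ 2) :
    ∫ ω, (V ω ^ p)⁻¹ ∂ℙ ≤ (∏ k ∈ Finset.Icc 1 p, ((N : ℝ) - 2 * k))⁻¹ := by
  obtain ⟨q, rfl⟩ : ∃ q, p = q + 1 := ⟨p - 1, by omega⟩
  obtain rfl : V = fun ω => ∑ i, Z ω i ^ 2 := funext hV
  have hr : (q : ℝ) + 1 < N / 2 := by
    have : (2 * (q + 1) : ℝ) < N := by exact_mod_cast hN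
    linarith
  have hVpos : ∀ᵐ ω ∂ℙ, 0 < ∑ i, Z ω i ^ 2 :=
    ae_sum_sq_pos_of_map_eq_gaussianReal (X := fun i ω => Z ω i) ⟨0, by omega⟩
      (hmeas _).aemeasurable one_ne_zero (hlaw _)
  calc ∫ ω, ((∑ i, Z ω i ^ 2) ^ (q + 1))⁻¹ ∂ℙ
      ≤ (q ! : ℝ)⁻¹ * ∫ t in Ioi 0, t ^ q * (1 + 2 * t) ^ (-(N / 2 : ℝ)) :=
        integral_inv_pow_le_of_integral_exp_neg_mul_le (by fun_prop) hVpos q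
          (fun t ht => by
            simpa using integral_exp_neg_mul_sum_sq_le (fun i => (hmeas i).aemeasurable) hindep
              hlaw ht.le)
          (integrableOn_pow_mul_one_add_mul_rpow_neg q two_pos hr)
    _ = _ := by
      rw [integral_pow_mul_one_add_mul_rpow_neg q two_pos, integral_pow_mul_one_add_rpow_neg q hr,
        prod_Icc_sub_two_mul]
      field_simp

/-- Let `V` be a noncentral chi-square random variable with `N` degrees of
freedom and noncentrality parameter `a ≥ 0` (realized as `V = ‖Z‖²` for a Gaussian vector
`Z` in `ℝᴺ` with identity covariance and mean `m` of squared norm `a`), and let `p` be a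
positive integer with `N > 2p`.  Then `E[V⁻ᵖ] ≤ 1/((N-2)(N-4)⋯(N-2p))`. -/
theorem stmt_3
    {Ω : Type*} [MeasureSpace Ω] [IsProbabilityMeasure (ℙ : Measure Ω)]
    (N p : ℕ) (hp : 0 < p) (hN : 2 * p < N)
    (a : ℝ) (ha : 0 ≤ a)
    (m : Fin N → ℝ) (hm : ∑ i, (m i) ^ 2 = a)
    (Z : Ω → Fin N → ℝ)
    (hmeas : ∀ i, Measurable fun ω => Z ω i)
    (hindep : iIndepFun (fun i ω => Z ω i) ℙ)
    (hlaw : ∀ i, Measure.map (fun ω => Z ω i) ℙ = gaussianReal (m i) 1)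
    (V : Ω → ℝ) (hV : ∀ ω, V ω = ∑ i, (Z ω i) ^ 2) :
    ∫ ω, (V ω ^ p)⁻¹ ∂ℙ ≤ (∏ k ∈ Finset.Icc 1 p, ((N : ℝ) - 2 * k))⁻¹ :=
  stmt_3_general N p hp hN m Z hmeas hindep hlaw V hV
end

section
/- For positive integers D and N and x ≥ 0, with X_D ~ χ²(D), X_N ~ χ²(N) independent, one has Dkhi(D,N,x) = P(F_{D+2,N} ≥ x/(D+2)) - (x/D)·P(F_{D,N+2} ≥ (N+2)x/(DN)), where Dkhi(D,N,x) = E[(X_D - x X_N/N)₊]/D and F_{a,b} denotes a Fisher (F) random variable with a and b degrees of freedom. -/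
/-!
Size biasing a Gamma law raises its shape by one: `s · Γ(a, r)(ds) = (a / r) · Γ(a + 1, r)(ds)`.
On `S = {c Y ≤ X}` one has `(X - c Y)₊ = (X - c Y) 𝟙_S`, so
`E[(X - c Y)₊] = E[X 𝟙_S] - c E[Y 𝟙_S]`, and size biasing `X`, resp. `Y`, turns the two terms into
`D · P(S)` under `Γ(D/2 + 1) ⊗ Γ(N/2)` and `c N · P(S)` under `Γ(D/2) ⊗ Γ(N/2 + 1)`.
For `c = x / N` and `Y > 0`, `S` is the event on the F-ratio appearing in each probability.
-/

open MeasureTheory ProbabilityTheory Real Set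
open scoped ENNReal

namespace ProbabilityTheory

instance instSFiniteGammaMeasure (a r : ℝ) : SFinite (gammaMeasure a r) := by
  unfold gammaMeasure; infer_instance

lemma gammaPDF_mul_ofReal {a r : ℝ} (ha : 0 < a) (hr : 0 < r) (s : ℝ) :
    gammaPDF a r s * ENNReal.ofReal s = ENNReal.ofReal (a / r) * gammaPDF (a + 1) r s := by
  rcases lt_or_ge s 0 with hs | hs
  · simp [gammaPDF_of_neg hs]
  rw [gammaPDF_of_nonneg hs, gammaPDF_of_nonneg hs, ← ENNReal.ofReal_mul (by positivity),
    ← ENNReal.ofReal_mul (by positivity), add_sub_cancel_right, Real.Gamma_add_one ha.ne',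
    Real.rpow_add_one hr.ne']
  congr 1
  rcases hs.eq_or_lt with rfl | hs
  · simp [Real.zero_rpow ha.ne']
  have hsa : s ^ a = s ^ (a - 1) * s := by
    rw [← Real.rpow_add_one hs.ne', sub_add_cancel]
  have hΓ := Real.Gamma_pos_of_pos ha
  rw [hsa]
  field_simp

lemma gammaMeasure_Iic_zero (a r : ℝ) : gammaMeasure a r (Iic 0) = 0 := by
  rw [gammaMeasure, withDensity_apply _ measurableSet_Iic, ← Iio_union_right,
    ← nonpos_iff_eq_zero]
  refine (lintegral_union_le _ _ _).trans ?_
  simp [lintegral_gammaPDF_of_nonpos le_rfl]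

lemma ae_pos_gammaMeasure (a r : ℝ) : ∀ᵐ s ∂gammaMeasure a r, 0 < s := by
  simpa [ae_iff, Iic] using gammaMeasure_Iic_zero a r

lemma lintegral_ofReal_mul_gammaMeasure {a r : ℝ} (ha : 0 < a) (hr : 0 < r) {f : ℝ → ℝ≥0∞}
    (hf : Measurable f) :
    ∫⁻ s, ENNReal.ofReal s * f s ∂gammaMeasure a r
      = ENNReal.ofReal (a / r) * ∫⁻ s, f s ∂gammaMeasure (a + 1) r := by
  have hpdf (b : ℝ) : Measurable (gammaPDF b r) := (measurable_gammaPDFReal b r).ennreal_ofReal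
  rw [gammaMeasure, gammaMeasure, lintegral_withDensity_eq_lintegral_mul _ (hpdf a) (by fun_prop),
    lintegral_withDensity_eq_lintegral_mul _ (hpdf (a + 1)) hf,
    ← lintegral_const_mul _ ((hpdf (a + 1)).mul hf)]
  refine lintegral_congr fun s => ?_
  simp only [Pi.mul_apply]
  rw [← mul_assoc, gammaPDF_mul_ofReal ha hr, mul_assoc]

lemma lintegral_ofReal_fst_mul_gammaMeasure_prod {a r : ℝ} (ha : 0 < a) (hr : 0 < r)
    (ν : Measure ℝ) [SFinite ν] {f : ℝ × ℝ → ℝ≥0∞} (hf : Measurable f) :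
    ∫⁻ p, ENNReal.ofReal p.1 * f p ∂(gammaMeasure a r).prod ν
      = ENNReal.ofReal (a / r) * ∫⁻ p, f p ∂(gammaMeasure (a + 1) r).prod ν := by
  rw [lintegral_prod _ (by fun_prop), lintegral_prod _ hf.aemeasurable,
    ← lintegral_ofReal_mul_gammaMeasure ha hr hf.lintegral_prod_right']
  refine lintegral_congr fun s => ?_
  exact lintegral_const_mul (ENNReal.ofReal s) (hf.comp measurable_prodMk_left)

lemma lintegral_ofReal_snd_mul_prod_gammaMeasure {b r : ℝ} (hb : 0 < b) (hr : 0 < r)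
    (μ : Measure ℝ) [SFinite μ] {f : ℝ × ℝ → ℝ≥0∞} (hf : Measurable f) :
    ∫⁻ p, ENNReal.ofReal p.2 * f p ∂μ.prod (gammaMeasure b r)
      = ENNReal.ofReal (b / r) * ∫⁻ p, f p ∂μ.prod (gammaMeasure (b + 1) r) := by
  rw [← lintegral_prod_swap, ← lintegral_prod_swap (f := f)]
  exact lintegral_ofReal_fst_mul_gammaMeasure_prod hb hr μ (hf.comp measurable_swap)

lemma ofReal_sub_add_ofReal_mul_indicator {c : ℝ} (hc : 0 ≤ c) {p : ℝ × ℝ} (hp : 0 ≤ p.2) :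
    ENNReal.ofReal (p.1 - c * p.2)
        + ENNReal.ofReal c * (ENNReal.ofReal p.2 * {q : ℝ × ℝ | c * q.2 ≤ q.1}.indicator 1 p)
      = ENNReal.ofReal p.1 * {q : ℝ × ℝ | c * q.2 ≤ q.1}.indicator 1 p := by
  by_cases h : c * p.2 ≤ p.1
  · simp only [indicator_of_mem (show p ∈ {q : ℝ × ℝ | c * q.2 ≤ q.1} from h), Pi.one_apply,
      mul_one]
    rw [← ENNReal.ofReal_mul hc, ← ENNReal.ofReal_add (sub_nonneg.2 h) (by positivity),
      sub_add_cancel]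
  · simp [indicator_of_notMem (show p ∉ {q : ℝ × ℝ | c * q.2 ≤ q.1} from h),
      ENNReal.ofReal_of_nonpos (sub_nonpos.2 (not_le.1 h).le)]

theorem lintegral_ofReal_sub_gammaMeasure_prod {a b r c : ℝ} (ha : 0 < a) (hb : 0 < b)
    (hr : 0 < r) (hc : 0 ≤ c) :
    ∫⁻ p, ENNReal.ofReal (p.1 - c * p.2) ∂(gammaMeasure a r).prod (gammaMeasure b r)
        + ENNReal.ofReal (c * (b / r))
          * ((gammaMeasure a r).prod (gammaMeasure (b + 1) r)) {p | c * p.2 ≤ p.1}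
      = ENNReal.ofReal (a / r)
          * ((gammaMeasure (a + 1) r).prod (gammaMeasure b r)) {p | c * p.2 ≤ p.1} := by
  have hS : MeasurableSet {p : ℝ × ℝ | c * p.2 ≤ p.1} :=
    measurableSet_le (by fun_prop) (by fun_prop)
  have h1 : Measurable ({p : ℝ × ℝ | c * p.2 ≤ p.1}.indicator (1 : ℝ × ℝ → ℝ≥0∞)) :=
    measurable_one.indicator hS
  rw [← lintegral_indicator_one hS, ← lintegral_indicator_one hS, ENNReal.ofReal_mul hc, mul_assoc,
    ← lintegral_ofReal_snd_mul_prod_gammaMeasure hb hr _ h1,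
    ← lintegral_ofReal_fst_mul_gammaMeasure_prod ha hr _ h1,
    ← lintegral_const_mul _ (by fun_prop), ← lintegral_add_left (by fun_prop)]
  refine lintegral_congr_ae ?_
  filter_upwards [Measure.quasiMeasurePreserving_snd.ae (ae_pos_gammaMeasure b r)] with p hp
  exact ofReal_sub_add_ofReal_mul_indicator hc hp.le

theorem integral_max_sub_gammaMeasure_prod {a b r c : ℝ} (ha : 0 < a) (hb : 0 < b)
    (hr : 0 < r) (hc : 0 ≤ c) :
    ∫ p, max (p.1 - c * p.2) 0 ∂(gammaMeasure a r).prod (gammaMeasure b r)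
      = a / r * (((gammaMeasure (a + 1) r).prod (gammaMeasure b r)) {p | c * p.2 ≤ p.1}).toReal
        - c * (b / r)
          * (((gammaMeasure a r).prod (gammaMeasure (b + 1) r)) {p | c * p.2 ≤ p.1}).toReal := by
  have := isProbabilityMeasure_gammaMeasure ha hr
  have := isProbabilityMeasure_gammaMeasure hb hr
  have := isProbabilityMeasure_gammaMeasure (ha.trans (lt_add_one a)) hr
  have := isProbabilityMeasure_gammaMeasure (hb.trans (lt_add_one b)) hr
  have key := lintegral_ofReal_sub_gammaMeasure_prod ha hb hr hc
  have hfin : ∫⁻ p, ENNReal.ofReal (p.1 - c * p.2) ∂(gammaMeasure a r).prod (gammaMeasure b r)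
      ≠ ⊤ :=
    ne_top_of_le_ne_top (by finiteness) (key ▸ le_self_add)
  rw [integral_eq_lintegral_of_nonneg_ae (f := fun p : ℝ × ℝ => max (p.1 - c * p.2) 0)
    (ae_of_all _ fun _ => le_max_right _ _) (by fun_prop)]
  simp only [ENNReal.ofReal_max, ENNReal.ofReal_zero, zero_le, max_eq_left]
  rw [eq_sub_iff_add_eq, ← ENNReal.toReal_ofReal (by positivity : 0 ≤ c * (b / r)),
    ← ENNReal.toReal_ofReal (by positivity : 0 ≤ a / r), ← ENNReal.toReal_mul,
    ← ENNReal.toReal_mul, ← ENNReal.toReal_add hfin (by finiteness), key]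

lemma ae_pos_of_map_eq_gammaMeasure {Ω : Type*} [MeasurableSpace Ω] {μ : Measure Ω} {B : Ω → ℝ}
    (hB : Measurable B) {a r : ℝ} (hlaw : μ.map B = gammaMeasure a r) : ∀ᵐ ω ∂μ, 0 < B ω :=
  ae_of_ae_map hB.aemeasurable (hlaw ▸ ae_pos_gammaMeasure a r)

lemma le_div_div_div_iff {a b d m k : ℝ} (hb : 0 < b) (hd : 0 < d) (hm : 0 < m) :
    k ≤ a / d / (b / m) ↔ k * d / m * b ≤ a := by
  rw [div_div_eq_mul_div, le_div_iff₀ hb, div_mul_eq_mul_div, le_div_iff₀ hd,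
    div_mul_eq_mul_div, div_le_iff₀ hm, mul_right_comm k d b]

lemma measure_le_div_div_div {Ω : Type*} [MeasurableSpace Ω] {μ : Measure Ω} {A B : Ω → ℝ}
    (hA : Measurable A) (hB : Measurable B) (hBpos : ∀ᵐ ω ∂μ, 0 < B ω) {d m k : ℝ} (hd : 0 < d)
    (hm : 0 < m) :
    μ {ω | k ≤ A ω / d / (B ω / m)} = μ.map (fun ω => (A ω, B ω)) {p | k * d / m * p.2 ≤ p.1} := by
  rw [Measure.map_apply (hA.prodMk hB) (measurableSet_le (by fun_prop) (by fun_prop))]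
  refine measure_congr (Filter.eventuallyEq_set.2 ?_)
  filter_upwards [hBpos] with ω hω
  exact le_div_div_div_iff hω hd hm

end ProbabilityTheory

/-- For positive integers `D` and `N` and `x ≥ 0`, with `X ~ χ²(D)` and
`Y ~ χ²(N)` independent, one has
`Dkhi(D,N,x) = P(F_{D+2,N} ≥ x/(D+2)) - (x/D)·P(F_{D,N+2} ≥ (N+2)x/(DN))`,
where `Dkhi(D,N,x) = E[(X - x·Y/N)₊]/D` and a Fisher random variable `F_{a,b}` is the
ratio `(U/a)/(W/b)` of two independent chi-squares `U ~ χ²(a)`, `W ~ χ²(b)` (a chi-square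
with `k` degrees of freedom being the Gamma distribution with shape `k/2` and rate `1/2`). -/
theorem stmt_5
    {Ω : Type*} [MeasureSpace Ω] [IsProbabilityMeasure (ℙ : Measure Ω)]
    (D N : ℕ) (hD : 0 < D) (hN : 0 < N) (x : ℝ) (hx : 0 ≤ x)
    (X Y A B C E : Ω → ℝ)
    (hX : Measurable X) (hY : Measurable Y) (hA : Measurable A)
    (hB : Measurable B) (hC : Measurable C) (hE : Measurable E)
    (hXlaw : Measure.map X ℙ = gammaMeasure (D / 2) (1 / 2))
    (hYlaw : Measure.map Y ℙ = gammaMeasure (N / 2) (1 / 2))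
    (hAlaw : Measure.map A ℙ = gammaMeasure ((D + 2) / 2) (1 / 2))
    (hBlaw : Measure.map B ℙ = gammaMeasure (N / 2) (1 / 2))
    (hClaw : Measure.map C ℙ = gammaMeasure (D / 2) (1 / 2))
    (hElaw : Measure.map E ℙ = gammaMeasure ((N + 2) / 2) (1 / 2))
    (hXY : IndepFun X Y ℙ) (hAB : IndepFun A B ℙ) (hCE : IndepFun C E ℙ) :
    (∫ ω, max (X ω - x * Y ω / N) 0 ∂ℙ) / D =
      (ℙ {ω | (A ω / (D + 2)) / (B ω / N) ≥ x / (D + 2)}).toReal -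
        x / D * (ℙ {ω | (C ω / D) / (E ω / (N + 2)) ≥ (N + 2) * x / (D * N)}).toReal := by
  have hD' : (0 : ℝ) < D := Nat.cast_pos.2 hD
  have hN' : (0 : ℝ) < N := Nat.cast_pos.2 hN
  have hlawXY := hXY.map_prod_eq_prod_map_map hX.aemeasurable hY.aemeasurable
  have hlawAB := hAB.map_prod_eq_prod_map_map hA.aemeasurable hB.aemeasurable
  have hlawCE := hCE.map_prod_eq_prod_map_map hC.aemeasurable hE.aemeasurable
  rw [hXlaw, hYlaw] at hlawXY
  rw [hAlaw, hBlaw] at hlawAB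
  rw [hClaw, hElaw] at hlawCE
  have hInt : ∫ ω, max (X ω - x * Y ω / N) 0 ∂ℙ
      = ∫ p, max (p.1 - x / N * p.2) 0 ∂Measure.map (fun ω => (X ω, Y ω)) ℙ := by
    rw [integral_map (hX.prodMk hY).aemeasurable (by fun_prop)]
    simp only [mul_div_right_comm]
  simp only [ge_iff_le]
  rw [measure_le_div_div_div hA hB (ae_pos_of_map_eq_gammaMeasure hB hBlaw) (by positivity) hN',
    measure_le_div_div_div hC hE (ae_pos_of_map_eq_gammaMeasure hE hElaw) hD' (by positivity),
    hlawAB, hlawCE, hInt, hlawXY, integral_max_sub_gammaMeasure_prod (by positivity) (by positivity)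
      (by norm_num) (by positivity),
    show x / (D + 2) * (D + 2) / N = x / N by field_simp,
    show (N + 2) * x / (D * N) * D / (N + 2) = x / N by field_simp,
    show (D : ℝ) / 2 + 1 = (D + 2) / 2 by ring, show (N : ℝ) / 2 + 1 = (N + 2) / 2 by ring]
  field_simp
end

section
/- Let ε be a standard Gaussian vector in ℝⁿ and δ ∈ (0,1). Then P(‖ε‖² ≤ n(1-δ)) ≤ exp(-nδ²/4). -/
/-!
Chernoff bound for the lower tail at `t = -δ/2`: the moment generating function of a sum of `n`
squared independent standard Gaussians is `(1 - 2t)^(-n/2)`, so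
`P(‖ε‖² ≤ n(1-δ)) ≤ exp(nδ(1-δ)/2) (1+δ)^(-n/2)`, and `log (1 + δ) ≥ δ - δ²/2` turns the right-hand
side into `exp(-nδ²/4)`.
-/

open MeasureTheory ProbabilityTheory Real
open scoped NNReal

lemma Real.sub_sq_div_two_le_log_one_add {x : ℝ} (hx : 0 ≤ x) : x - x ^ 2 / 2 ≤ log (1 + x) := by
  refine le_trans ?_ (le_log_one_add_of_nonneg hx)
  rw [le_div_iff₀ (by positivity)]
  nlinarith [pow_nonneg hx 3]

lemma Real.exp_mul_inv_sqrt_one_add_pow_le {δ : ℝ} (hδ : 0 ≤ δ) (n : ℕ) :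
    exp (δ / 2 * (n * (1 - δ))) * (√(1 + δ))⁻¹ ^ n ≤ exp (-n * δ ^ 2 / 4) := by
  have hsqrt : (√(1 + δ))⁻¹ = exp (-log (1 + δ) / 2) := by
    rw [sqrt_eq_rpow, rpow_def_of_pos (by linarith), ← exp_neg]
    ring_nf
  rw [hsqrt, ← exp_nat_mul, ← exp_add, exp_le_exp]
  nlinarith [sub_sq_div_two_le_log_one_add hδ, (Nat.cast_nonneg n : (0 : ℝ) ≤ n)]

namespace ProbabilityTheory

lemma integral_exp_mul_sq_gaussianReal {v : ℝ≥0} {t : ℝ} (ht : 2 * t * v < 1) :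
    ∫ x, exp (t * x ^ 2) ∂gaussianReal 0 v = (√(1 - 2 * t * v))⁻¹ := by
  rcases eq_or_ne v 0 with rfl | hv
  · simp
  have hv₀ : (0 : ℝ) < v := by positivity
  have hb : 0 < 1 - 2 * t * v := by linarith
  calc ∫ x, exp (t * x ^ 2) ∂gaussianReal 0 v
      = ∫ x, (√(2 * π * v))⁻¹ * exp (-((1 - 2 * t * v) / (2 * v)) * x ^ 2) := by
        rw [integral_gaussianReal_eq_integral_smul hv]
        congr 1 with x
        rw [gaussianPDFReal, smul_eq_mul, mul_assoc, ← exp_add]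
        congr 2
        field_simp
        ring
    _ = (√(2 * π * v))⁻¹ * √(π / ((1 - 2 * t * v) / (2 * v))) := by
        rw [integral_const_mul, integral_gaussian]
    _ = (√(1 - 2 * t * v))⁻¹ := by
        rw [← sqrt_inv, ← sqrt_mul (by positivity), ← sqrt_inv]
        congr 1
        field_simp

variable {Ω : Type*} {mΩ : MeasurableSpace Ω} {μ : Measure Ω}

lemma aemeasurable_of_map_eq_gaussianReal {X : Ω → ℝ} {m : ℝ} {v : ℝ≥0}
    (hX : μ.map X = gaussianReal m v) : AEMeasurable X μ :=
  .of_map_ne_zero (by simp [hX, NeZero.ne])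

lemma mgf_sq_of_map_eq_gaussianReal {X : Ω → ℝ} {v : ℝ≥0} (hX : μ.map X = gaussianReal 0 v)
    {t : ℝ} (ht : 2 * t * v < 1) :
    mgf (fun ω ↦ X ω ^ 2) μ t = (√(1 - 2 * t * v))⁻¹ := by
  rw [← integral_exp_mul_sq_gaussianReal ht, ← hX, ← mgf,
    mgf_map (aemeasurable_of_map_eq_gaussianReal hX) (by fun_prop)]
  rfl

lemma mgf_sum_sq_of_iIndepFun {ι : Type*} [Fintype ι] {X : ι → Ω → ℝ} {v : ℝ≥0}
    (hindep : iIndepFun X μ) (hlaw : ∀ i, μ.map (X i) = gaussianReal 0 v)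
    {t : ℝ} (ht : 2 * t * v < 1) :
    mgf (fun ω ↦ ∑ i, X i ω ^ 2) μ t = (√(1 - 2 * t * v))⁻¹ ^ Fintype.card ι := by
  have hsq : iIndepFun (fun i ω ↦ X i ω ^ 2) μ := hindep.comp _ fun _ ↦ measurable_id.pow_const 2
  calc mgf (fun ω ↦ ∑ i, X i ω ^ 2) μ t = mgf (∑ i, fun ω ↦ X i ω ^ 2) μ t := by
        simp only [Finset.sum_fn]
    _ = ∏ i, mgf (fun ω ↦ X i ω ^ 2) μ t :=
        hsq.mgf_sum₀ (fun i ↦ (aemeasurable_of_map_eq_gaussianReal (hlaw i)).pow_const 2) _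
    _ = (√(1 - 2 * t * v))⁻¹ ^ Fintype.card ι := by
        simp [mgf_sq_of_map_eq_gaussianReal (hlaw _) ht]

lemma measureReal_le_le_exp_mul_mgf_of_nonneg [IsFiniteMeasure μ] {X : Ω → ℝ}
    (hX : AEMeasurable X μ) (hX₀ : ∀ ω, 0 ≤ X ω) (a : ℝ) {t : ℝ} (ht : t ≤ 0) :
    μ.real {ω | X ω ≤ a} ≤ exp (-t * a) * mgf X μ t := by
  refine measure_le_le_exp_mul_mgf a ht (.of_bound (by fun_prop) 1 (ae_of_all _ fun ω ↦ ?_))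
  rw [norm_of_nonneg (exp_pos _).le, exp_le_one_iff]
  exact mul_nonpos_of_nonpos_of_nonneg ht (hX₀ ω)

theorem measureReal_sum_sq_le_mul_one_sub_le {ι : Type*} [Fintype ι] {X : ι → Ω → ℝ}
    (hindep : iIndepFun X μ) (hlaw : ∀ i, μ.map (X i) = gaussianReal 0 1) {δ : ℝ} (hδ : 0 ≤ δ) :
    μ.real {ω | ∑ i, X i ω ^ 2 ≤ Fintype.card ι * (1 - δ)}
      ≤ exp (-Fintype.card ι * δ ^ 2 / 4) := by
  have := hindep.isProbabilityMeasure
  have hmeas : AEMeasurable (fun ω ↦ ∑ i, X i ω ^ 2) μ :=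
    Finset.aemeasurable_fun_sum _ fun i _ ↦ (aemeasurable_of_map_eq_gaussianReal (hlaw i)).pow_const 2
  calc μ.real {ω | ∑ i, X i ω ^ 2 ≤ Fintype.card ι * (1 - δ)}
      ≤ exp (-(-δ / 2) * (Fintype.card ι * (1 - δ))) * mgf (fun ω ↦ ∑ i, X i ω ^ 2) μ (-δ / 2) :=
        measureReal_le_le_exp_mul_mgf_of_nonneg hmeas (fun ω ↦ by positivity) _ (by linarith)
    _ = exp (δ / 2 * (Fintype.card ι * (1 - δ))) * (√(1 + δ))⁻¹ ^ Fintype.card ι := by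
        rw [mgf_sum_sq_of_iIndepFun hindep hlaw (by rw [NNReal.coe_one]; linarith), NNReal.coe_one]
        ring_nf
    _ ≤ exp (-Fintype.card ι * δ ^ 2 / 4) := exp_mul_inv_sqrt_one_add_pow_le hδ _

end ProbabilityTheory

theorem stmt_15_general
    {Ω : Type*} [MeasureSpace Ω]
    (n : ℕ) (δ : ℝ) (hδ0 : 0 < δ)
    (ε : Ω → Fin n → ℝ)
    (hindep : iIndepFun (fun i ω => ε ω i) ℙ)
    (hlaw : ∀ i, Measure.map (fun ω => ε ω i) ℙ = gaussianReal 0 1) :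
    (ℙ {ω | ∑ i, (ε ω i) ^ 2 ≤ n * (1 - δ)}).toReal ≤ exp (-(n : ℝ) * δ ^ 2 / 4) := by
  simpa [measureReal_def] using measureReal_sum_sq_le_mul_one_sub_le hindep hlaw hδ0.le

/-- Laurent–Massart lower deviation.
Let `ε` be a standard Gaussian vector in `ℝⁿ` (i.e. its coordinates are i.i.d. standard
Gaussian random variables) and `δ ∈ (0,1)`.  Then
`P(‖ε‖² ≤ n(1-δ)) ≤ exp(-nδ²/4)`. -/
theorem stmt_15
    {Ω : Type*} [MeasureSpace Ω] [IsProbabilityMeasure (ℙ : Measure Ω)]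
    (n : ℕ) (δ : ℝ) (hδ0 : 0 < δ) (hδ1 : δ < 1)
    (ε : Ω → Fin n → ℝ)
    (hmeas : ∀ i, Measurable fun ω => ε ω i)
    (hindep : iIndepFun (fun i ω => ε ω i) ℙ)
    (hlaw : ∀ i, Measure.map (fun ω => ε ω i) ℙ = gaussianReal 0 1) :
    (ℙ {ω | ∑ i, (ε ω i) ^ 2 ≤ n * (1 - δ)}).toReal ≤ exp (-(n : ℝ) * δ ^ 2 / 4) :=
  stmt_15_general n δ hδ0 ε hindep hlaw
end

section
/- Let f : [0,1) → ℝ be continuous and piecewise linear with knots 0 = a₀ < a₁ < ⋯ < a_{q+1} = 1 and slopes α₁,…,α_{q+1} satisfying (1/q)·Σ_{i=1}^{q} |α_{i+1} - α_i| ≤ R. For any integer j ≥ 1 with q ≤ 2^j - 1, there exists a continuous piecewise linear function g with at most q knots all belonging to the dyadic grid {k·2^{-j} : 1 ≤ k ≤ 2^j - 1} such that sup_{x ∈ [0,1)} |f(x) - g(x)| ≤ R·q·2^{-j}. -/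
/-!
Round every knot up to the dyadic grid of mesh `2⁻ʲ`, keeping the slopes. Writing both
functions as `∑ αᵢ (min aᵢ₊₁ x - min aᵢ x)`, their difference is
`∑ αᵢ (Cᵢ₊₁ - Cᵢ)` with `Cᵢ = min aᵢ x - min bᵢ x`, where `|Cᵢ| ≤ 2⁻ʲ` and `C` vanishes at both
ends (the end knots `0` and `1` are on the grid). Summation by parts turns this into
`∑ (αᵢ - αᵢ₊₁) Cᵢ₊₁`, bounded by the total variation of the slopes times `2⁻ʲ`.
-/

open MeasureTheory Set

lemma ite_Ico_eq_indicator (c d v : ℝ) :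
    (fun t => if c ≤ t ∧ t < d then v else 0) = (Ico c d).indicator (fun _ => v) := by
  ext t; simp [indicator_apply]

lemma intervalIntegrable_ite_Ico (c d v a x : ℝ) :
    IntervalIntegrable (fun t => if c ≤ t ∧ t < d then v else 0) volume a x := by
  have h := intervalIntegrable_const (c := v) (μ := volume) (a := a) (b := x)
  rw [ite_Ico_eq_indicator]
  exact ⟨h.1.indicator measurableSet_Ico, h.2.indicator measurableSet_Ico⟩

lemma intervalIntegral_ite_Ico {a c d x : ℝ} (hac : a ≤ c) (hcd : c ≤ d) (hax : a ≤ x) (v : ℝ) :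
    ∫ t in a..x, (if c ≤ t ∧ t < d then v else 0) = v * (min d x - min c x) := by
  have hvol : volume.real (Ico c d ∩ Ioc a x) = min d x - min c x := by
    rw [measureReal_congr ((Ico_ae_eq_Ioc (μ := volume)).inter (ae_eq_refl (Ioc a x))),
      Ioc_inter_Ioc, max_eq_left hac, Real.volume_real_Ioc]
    rcases le_total c x with h | h
    · rw [min_eq_left h, max_eq_left (by simp [hcd, h])]
    · rw [min_eq_right h, min_eq_right (h.trans hcd), sub_self, max_eq_right (by linarith)]
  rw [ite_Ico_eq_indicator, intervalIntegral.integral_of_le hax,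
    integral_indicator measurableSet_Ico, setIntegral_const,
    measureReal_restrict_apply measurableSet_Ico, hvol, smul_eq_mul, mul_comm]

lemma intervalIntegral_sum_ite_Ico {n : ℕ} {u : Fin (n + 1) → ℝ} (hu : Monotone u)
    (α : Fin n → ℝ) {a x : ℝ} (hau : a ≤ u 0) (hax : a ≤ x) :
    ∫ t in a..x, ∑ i : Fin n, (if u i.castSucc ≤ t ∧ t < u i.succ then α i else 0) =
      ∑ i : Fin n, α i * (min (u i.succ) x - min (u i.castSucc) x) := by
  rw [intervalIntegral.integral_finsetSum fun i _ => intervalIntegrable_ite_Ico _ _ _ _ _]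
  exact Finset.sum_congr rfl fun i _ =>
    intervalIntegral_ite_Ico (hau.trans (hu (Fin.zero_le _))) (hu i.castSucc_le_succ) hax _

lemma sum_mul_sub_eq_of_eq_zero {n : ℕ} (α : Fin (n + 1) → ℝ) {C : Fin (n + 2) → ℝ}
    (h0 : C 0 = 0) (hlast : C (Fin.last (n + 1)) = 0) :
    ∑ i, α i * (C i.succ - C i.castSucc) =
      ∑ i : Fin n, (α i.castSucc - α i.succ) * C i.succ.castSucc := by
  simp only [mul_sub, Finset.sum_sub_distrib]
  rw [Fin.sum_univ_castSucc (fun i => α i * C i.succ),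
    Fin.sum_univ_succ (fun i => α i * C i.castSucc)]
  simp [h0, hlast, sub_mul, Finset.sum_sub_distrib]

lemma abs_sum_mul_sub_le {n : ℕ} (α : Fin (n + 1) → ℝ) {C : Fin (n + 2) → ℝ}
    (h0 : C 0 = 0) (hlast : C (Fin.last (n + 1)) = 0) {D : ℝ} (hC : ∀ i, |C i| ≤ D) :
    |∑ i, α i * (C i.succ - C i.castSucc)| ≤ (∑ i : Fin n, |α i.succ - α i.castSucc|) * D := by
  rw [sum_mul_sub_eq_of_eq_zero α h0 hlast, Finset.sum_mul]
  refine (Finset.abs_sum_le_sum_abs _ _).trans (Finset.sum_le_sum fun i _ => ?_)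
  rw [abs_mul, abs_sub_comm]
  exact mul_le_mul_of_nonneg_left (hC _) (abs_nonneg _)

noncomputable def dyadicCeil (j : ℕ) (x : ℝ) : ℝ := min 1 (⌈x * 2 ^ j⌉₊ / 2 ^ j)

section dyadicCeil

variable {j : ℕ} {x : ℝ}

lemma dyadicCeil_mono : Monotone (dyadicCeil j) := fun _ _ h =>
  min_le_min le_rfl (div_le_div_of_nonneg_right
    (Nat.cast_le.mpr (Nat.ceil_mono (mul_le_mul_of_nonneg_right h (by positivity)))) (by positivity))

@[simp] lemma dyadicCeil_zero : dyadicCeil j 0 = 0 := by simp [dyadicCeil]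

@[simp] lemma dyadicCeil_one : dyadicCeil j 1 = 1 := by
  have h : ⌈(2 : ℝ) ^ j⌉₊ = 2 ^ j := by exact_mod_cast Nat.ceil_natCast (2 ^ j)
  simp [dyadicCeil, h]

lemma le_dyadicCeil (hx : x ≤ 1) : x ≤ dyadicCeil j x :=
  le_min hx ((le_div_iff₀ (by positivity)).mpr (Nat.le_ceil _))

lemma dyadicCeil_le (hx : 0 ≤ x) : dyadicCeil j x ≤ x + 1 / 2 ^ j := by
  refine (min_le_right _ _).trans ?_
  rw [div_le_iff₀ (by positivity), add_mul, one_div_mul_cancel (by positivity)]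
  exact (Nat.ceil_lt_add_one (by positivity)).le

lemma dyadicCeil_mem_grid (hx : 0 < x) :
    (∃ k : ℕ, 1 ≤ k ∧ k ≤ 2 ^ j - 1 ∧ dyadicCeil j x = k / 2 ^ j) ∨ dyadicCeil j x = 1 := by
  have hk : 1 ≤ ⌈x * 2 ^ j⌉₊ := Nat.one_le_iff_ne_zero.mpr (by positivity)
  rcases lt_or_ge ⌈x * 2 ^ j⌉₊ (2 ^ j) with hlt | hge
  · refine Or.inl ⟨_, hk, by omega, min_eq_right ?_⟩
    rw [div_le_one (by positivity)]
    exact_mod_cast hlt.le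
  · refine Or.inr (min_eq_left ?_)
    rw [one_le_div (by positivity)]
    exact_mod_cast hge

lemma abs_sub_dyadicCeil_le (hx : x ∈ Icc 0 1) : |x - dyadicCeil j x| ≤ 1 / 2 ^ j := by
  rw [abs_sub_comm, abs_of_nonneg (sub_nonneg.mpr (le_dyadicCeil hx.2))]
  linarith [dyadicCeil_le (j := j) hx.1]

end dyadicCeil

theorem stmt_18_general
    (q j : ℕ)
    (R : ℝ)
    (a : Fin (q + 2) → ℝ) (ha : StrictMono a) (ha0 : a 0 = 0) (ha1 : a (Fin.last (q + 1)) = 1)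
    (α : Fin (q + 1) → ℝ)
    (hTV : (∑ i : Fin q, |α i.succ - α i.castSucc|) ≤ R * q)
    (f : ℝ → ℝ)
    (hf : ∀ x ∈ Set.Ico (0 : ℝ) 1,
      f x = f 0 + ∫ t in (0 : ℝ)..x,
        ∑ i : Fin (q + 1), if a i.castSucc ≤ t ∧ t < a i.succ then α i else 0) :
    ∃ (b : Fin (q + 2) → ℝ) (β : Fin (q + 1) → ℝ) (g : ℝ → ℝ),
      Monotone b ∧ b 0 = 0 ∧ b (Fin.last (q + 1)) = 1 ∧
        (∀ i : Fin (q + 2), i ≠ 0 → i ≠ Fin.last (q + 1) →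
          (∃ k : ℕ, 1 ≤ k ∧ k ≤ 2 ^ j - 1 ∧ b i = k * (2 : ℝ) ^ (-(j : ℤ))) ∨ b i = 1) ∧
        (∀ x ∈ Set.Ico (0 : ℝ) 1,
          g x = f 0 + ∫ t in (0 : ℝ)..x,
            ∑ i : Fin (q + 1), if b i.castSucc ≤ t ∧ t < b i.succ then β i else 0) ∧
        ∀ x ∈ Set.Ico (0 : ℝ) 1, |f x - g x| ≤ R * q * (2 : ℝ) ^ (-(j : ℤ)) := by
  have hmesh : (2 : ℝ) ^ (-(j : ℤ)) = 1 / 2 ^ j := by rw [zpow_neg, zpow_natCast, one_div]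
  have ha_mem : ∀ i, a i ∈ Icc 0 1 := fun i =>
    ⟨ha0 ▸ ha.monotone (Fin.zero_le i), ha1 ▸ ha.monotone (Fin.le_last i)⟩
  set b := dyadicCeil j ∘ a
  have hb : Monotone b := dyadicCeil_mono.comp ha.monotone
  have hb0 : b 0 = 0 := by simp [b, ha0]
  have hb1 : b (Fin.last (q + 1)) = 1 := by simp [b, ha1]
  refine ⟨b, α, fun x => f 0 + ∫ t in (0 : ℝ)..x,
      ∑ i : Fin (q + 1), if b i.castSucc ≤ t ∧ t < b i.succ then α i else 0,
    hb, hb0, hb1, fun i hi0 _ => ?_, fun _ _ => rfl, fun x hx => ?_⟩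
  · rw [hmesh]
    simpa only [b, Function.comp_apply, mul_one_div] using
      dyadicCeil_mem_grid (j := j) (ha0 ▸ ha (Fin.pos_of_ne_zero hi0))
  set C := fun i => min (a i) x - min (b i) x
  have hC : ∀ i, |C i| ≤ 1 / 2 ^ j := fun i =>
    ((abs_min_sub_min_le_max _ _ _ _).trans_eq (by simp [b])).trans (abs_sub_dyadicCeil_le (ha_mem i))
  beta_reduce
  rw [hf x hx, intervalIntegral_sum_ite_Ico ha.monotone α ha0.ge hx.1,
    intervalIntegral_sum_ite_Ico hb α hb0.ge hx.1, add_sub_add_left_eq_sub,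
    ← Finset.sum_sub_distrib, hmesh]
  calc _ = |∑ i, α i * (C i.succ - C i.castSucc)| := by
        congr 1; exact Finset.sum_congr rfl fun i _ => by ring
    _ ≤ (∑ i : Fin q, |α i.succ - α i.castSucc|) * (1 / 2 ^ j) :=
        abs_sum_mul_sub_le α (by simp [C, ha0, hb0]) (by simp [C, ha1, hb1]) hC
    _ ≤ R * q * (1 / 2 ^ j) := by gcongr

/-- Let `f : [0,1) → ℝ` be continuous and piecewise linear with knots
`0 = a₀ < a₁ < ⋯ < a_{q+1} = 1` and slopes `α₁,…,α_{q+1}` satisfying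
`(1/q)·Σ_{i=1}^{q} |α_{i+1} - α_i| ≤ R`.  For any integer `j ≥ 1` with `q ≤ 2ʲ - 1`,
there exists a continuous piecewise linear function `g` with at most `q` knots all
belonging to the dyadic grid `{k·2⁻ʲ : 1 ≤ k ≤ 2ʲ - 1}` (degenerate knots may sit at `1`)
such that `sup_{x ∈ [0,1)} |f(x) - g(x)| ≤ R·q·2⁻ʲ`. -/
theorem stmt_18
    (q j : ℕ) (hq : 1 ≤ q) (hj : 1 ≤ j) (hqj : q ≤ 2 ^ j - 1)
    (R : ℝ) (hR : 0 ≤ R)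
    (a : Fin (q + 2) → ℝ) (ha : StrictMono a) (ha0 : a 0 = 0) (ha1 : a (Fin.last (q + 1)) = 1)
    (α : Fin (q + 1) → ℝ)
    (hTV : (∑ i : Fin q, |α i.succ - α i.castSucc|) ≤ R * q)
    (f : ℝ → ℝ)
    (hf : ∀ x ∈ Set.Ico (0 : ℝ) 1,
      f x = f 0 + ∫ t in (0 : ℝ)..x,
        ∑ i : Fin (q + 1), if a i.castSucc ≤ t ∧ t < a i.succ then α i else 0) :
    ∃ (b : Fin (q + 2) → ℝ) (β : Fin (q + 1) → ℝ) (g : ℝ → ℝ),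
      Monotone b ∧ b 0 = 0 ∧ b (Fin.last (q + 1)) = 1 ∧
        (∀ i : Fin (q + 2), i ≠ 0 → i ≠ Fin.last (q + 1) →
          (∃ k : ℕ, 1 ≤ k ∧ k ≤ 2 ^ j - 1 ∧ b i = k * (2 : ℝ) ^ (-(j : ℤ))) ∨ b i = 1) ∧
        (∀ x ∈ Set.Ico (0 : ℝ) 1,
          g x = f 0 + ∫ t in (0 : ℝ)..x,
            ∑ i : Fin (q + 1), if b i.castSucc ≤ t ∧ t < b i.succ then β i else 0) ∧
        ∀ x ∈ Set.Ico (0 : ℝ) 1, |f x - g x| ≤ R * q * (2 : ℝ) ^ (-(j : ℤ)) :=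
  stmt_18_general q j R a ha ha0 ha1 α hTV f hf
end
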